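/- Let W be a real d_out × d_in matrix, A a real r × d_in matrix with rows a_1ᵀ,…,a_rᵀ, and B a real d_out × r matrix with columns b_1,…,b_r. Then for every input vector x ∈ ℝ^{d_in}, the multiplicative LoRA adapted matrix acts on x as a sum of channel-wise modulated applications of the base matrix: (W ⊙ (B·A))·x = Σ_{i=1}^r b_i ⊙ (W·(a_i ⊙ x)), where ⊙ between matrices denotes the entrywise (Hadamard) product and ⊙ between vectors denotes the entrywise product. -/
import Mathlib


open Matrix

/-- **Action of multiplicative LoRA on inputs.** With `b_i = Bᵀ i` the `i`-th column of
`B` and `a_i = A i` the `i`-th row of `A`, for every `x`,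
`(W ⊙ (B·A)) · x = Σ_{i=1}^r b_i ⊙ (W · (a_i ⊙ x))`, where `⊙` between vectors denotes
the entrywise product. -/
theorem multiplicative_lora_mulVec
    (d_out d_in r : ℕ)
    (W : Matrix (Fin d_out) (Fin d_in) ℝ)
    (A : Matrix (Fin r) (Fin d_in) ℝ)
    (B : Matrix (Fin d_out) (Fin r) ℝ)
    (x : Fin d_in → ℝ) :
    (Matrix.hadamard W (B * A)).mulVec x =
      ∑ i : Fin r, (Bᵀ i) * W.mulVec ((A i) * x) := by
  funext j
  simp only [mulVec, dotProduct, Finset.sum_apply, Pi.mul_apply, hadamard_apply,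
    Matrix.mul_apply, transpose_apply, Finset.sum_mul, Finset.mul_sum]
  rw [Finset.sum_comm]
  congr 1; ext k; congr 1; ext i; ring
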